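/- arXiv:1407.8078 — 5 statements merged into one kernel-verified Lean document; each statement's English description precedes it below -/
import Mathlib

section
/- Suppose |r(λ_n)| > 0 and that the n×n matrix X_n* B Y_0 is invertible. Then for every k ≥ 1 the matrix Z_k = r(M) Y_{k−1} of the FEAST iteration has full column rank n, each W_k is invertible, and the column span of Z_k equals the column span of r(M)^k Y_0. -/
open Matrix ComplexOrder

/-!
Since `Xᴴ B X = 1`, the rows `V = X_nᴴ B` satisfy `V r(M) = D V` with the invertible diagonal
`D = diag(r(λ_1), …, r(λ_n))`, hence `V r(M)^k Y_0 = D^k (V Y_0)` is invertible. Each `W_k` is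
invertible because `W_kᴴ G W_k = 1`, so by induction `Z_k = r(M)^k Y_0 U_k` with `U_k` invertible.
Then `V Z_k` is invertible, which forces rank `n`, and right multiplication by `U_k` does not
change the column span.
-/

namespace Matrix

variable {l m n R : Type*}

theorem submatrix_diagonal_mul_id [Fintype l] [Fintype m] [DecidableEq l] [DecidableEq m] [Semiring R]
    (d : m → R) (M : Matrix m n R) (f : l → m) :
    (diagonal d * M).submatrix f id = diagonal (d ∘ f) * M.submatrix f id := by
  ext i j
  simp [diagonal_mul]

theorem mul_conj_diagonal_of_mul_eq_one [Fintype m] [DecidableEq m] [Semiring R]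
    {P X : Matrix m m R} (hPX : P * X = 1) (d : m → R) :
    P * (X * diagonal d * P) = diagonal d * P := by
  rw [← Matrix.mul_assoc, ← Matrix.mul_assoc, hPX, Matrix.one_mul]

theorem mul_pow_eq_pow_mul_of_mul_eq [Fintype m] [Fintype n] [DecidableEq m] [DecidableEq n]
    [Semiring R] {V : Matrix n m R} {T : Matrix m m R} {D : Matrix n n R} (h : V * T = D * V)
    (k : ℕ) : V * T ^ k = D ^ k * V := by
  induction k with
  | zero => rw [pow_zero, pow_zero, Matrix.mul_one, Matrix.one_mul]
  | succ k ih => rw [pow_succ, pow_succ, ← Matrix.mul_assoc, ih, Matrix.mul_assoc, h,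
      Matrix.mul_assoc]

theorem isUnit_mul_pow_mul_of_mul_eq [Fintype m] [Fintype n] [DecidableEq m] [DecidableEq n]
    [CommRing R] {V : Matrix n m R} {T : Matrix m m R} {D : Matrix n n R} {Y : Matrix m n R}
    (h : V * T = D * V) (hD : IsUnit D) (hVY : IsUnit (V * Y)) (k : ℕ) :
    IsUnit (V * (T ^ k * Y)) := by
  rw [← Matrix.mul_assoc, mul_pow_eq_pow_mul_of_mul_eq h, Matrix.mul_assoc]
  exact (hD.pow k).mul hVY

theorem exists_isUnit_iterate_eq_pow_mul_mul [Fintype m] [Fintype n] [DecidableEq m]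
    [DecidableEq n] [CommRing R] {T : Matrix m m R} {Y Z : ℕ → Matrix m n R}
    {W : ℕ → Matrix n n R} (hZ : ∀ k, Z (k + 1) = T * Y k)
    (hY : ∀ k, Y (k + 1) = Z (k + 1) * W (k + 1)) (hW : ∀ k, IsUnit (W (k + 1))) (k : ℕ) :
    ∃ U : Matrix n n R, IsUnit U ∧ Z (k + 1) = T ^ (k + 1) * Y 0 * U := by
  induction k with
  | zero => exact ⟨1, isUnit_one, by rw [hZ, zero_add, pow_one, Matrix.mul_one]⟩
  | succ k ih =>
    obtain ⟨U, hU, hZU⟩ := ih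
    refine ⟨U * W (k + 1), hU.mul (hW k), ?_⟩
    rw [hZ, hY, hZU, pow_succ' T (k + 1)]
    simp only [Matrix.mul_assoc]

theorem rank_eq_card_of_isUnit_mul [Fintype m] [Fintype n] [DecidableEq n] [CommRing R]
    [StrongRankCondition R] {V : Matrix n m R} {Z : Matrix m n R} (h : IsUnit (V * Z)) :
    Z.rank = Fintype.card n :=
  le_antisymm Z.rank_le_card_width
    ((rank_of_isUnit _ h).symm.le.trans (rank_mul_le_right V Z))

theorem range_mulVecLin_mul_of_isUnit [Fintype n] [DecidableEq n] [CommRing R]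
    (P : Matrix m n R) {U : Matrix n n R} (hU : IsUnit U) :
    LinearMap.range (P * U).mulVecLin = LinearMap.range P.mulVecLin := by
  rw [mulVecLin_mul]
  exact LinearMap.range_comp_of_range_eq_top _
    (LinearMap.range_eq_top.mpr (mulVec_surjective_iff_isUnit.mpr hU))

end Matrix

/-- **FEAST subspace iteration, Lemma on the span of `Z_k`** (Güttel–Polizzi–Tang–Viaud,
Lemma 3.1).  If `|r(λ_n)| > 0` and `X_nᴴ B Y_0` is invertible, then for every `k ≥ 1`
the matrix `Z_k = r(M) Y_{k-1}` has full column rank `n`, each `W_k` is invertible,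
and the column span of `Z_k` equals the column span of `r(M)^k Y_0`. -/
theorem feast_span_Zk
    (N n : ℕ) (hnN : n < N)
    (B X : Matrix (Fin N) (Fin N) ℂ)
    (lam : Fin N → ℝ)
    (hX : Xᴴ * B * X = 1)
    (r : ℝ → ℂ)
    (hord : ∀ i j : Fin N, i ≤ j → ‖r (lam j)‖ ≤ ‖r (lam i)‖)
    (rM : Matrix (Fin N) (Fin N) ℂ)
    (hrM : rM = X * Matrix.diagonal (fun i => r (lam i)) * X⁻¹)
    (Y Z : ℕ → Matrix (Fin N) (Fin n) ℂ)
    (W : ℕ → Matrix (Fin n) (Fin n) ℂ)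
    (hZ : ∀ k, Z (k + 1) = rM * Y k)
    (hW : ∀ k, (W (k + 1))ᴴ * ((Z (k + 1))ᴴ * B * Z (k + 1)) * W (k + 1) = 1)
    (hY : ∀ k, Y (k + 1) = Z (k + 1) * W (k + 1))
    (Xn : Matrix (Fin N) (Fin n) ℂ)
    (hXn : Xn = X.submatrix id (Fin.castLE hnN.le))
    (hrn : 0 < ‖r (lam ⟨n - 1, by omega⟩)‖)
    (hY0 : IsUnit (Xnᴴ * B * Y 0)) :
    ∀ k, 1 ≤ k →
      (Z k).rank = n ∧ IsUnit (W k) ∧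
        LinearMap.range (Z k).mulVecLin
          = LinearMap.range ((rM ^ k) * Y 0).mulVecLin := by
  intro k hk
  obtain ⟨k, rfl⟩ := Nat.exists_eq_add_of_le' hk
  set g : Fin n → Fin N := Fin.castLE hnN.le
  have hr : ∀ i, r (lam (g i)) ≠ 0 := fun i => norm_pos_iff.mp <|
    hrn.trans_le (hord _ _ (by simp only [g, Fin.le_def, Fin.val_castLE]; omega))
  -- `(M * N).submatrix g id` and `M.submatrix g id * N` agree definitionally.
  have hrows : Xnᴴ * B * rM = diagonal (fun i => r (lam (g i))) * (Xnᴴ * B) := by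
    have hV : Xnᴴ * B = (Xᴴ * B).submatrix g id := by
      rw [hXn, conjTranspose_submatrix]; rfl
    rw [hV, hrM, inv_eq_left_inv hX]
    exact (congrArg (·.submatrix g id) (mul_conj_diagonal_of_mul_eq_one hX _)).trans
      (submatrix_diagonal_mul_id _ _ g)
  have hWunit : ∀ k, IsUnit (W (k + 1)) := fun k =>
    (isUnit_iff_isUnit_det _).mpr (isUnit_det_of_left_inverse (hW k))
  obtain ⟨U, hU, hZU⟩ := exists_isUnit_iterate_eq_pow_mul_mul hZ hY hWunit k
  have hVZ : IsUnit (Xnᴴ * B * Z (k + 1)) := by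
    rw [hZU, ← Matrix.mul_assoc]
    exact (isUnit_mul_pow_mul_of_mul_eq hrows
      (isUnit_diagonal.mpr (Pi.isUnit_iff.mpr fun i => (hr i).isUnit)) hY0 (k + 1)).mul hU
  refine ⟨by simpa using rank_eq_card_of_isUnit_mul hVZ, hWunit k, ?_⟩
  rw [hZU, range_mulVecLin_mul_of_isUnit _ hU]
end

section
/- For every z ∈ ℂ that is not among the mapped trapezoid nodes z_1,…,z_{2m}, the trapezoid-rule rational function satisfies r_m^{(T)}(z) = Σ_{j=1}^{2m} w_j/(z_j − z) = 1/(α + β · T_{2m}(((S + S^{-1})/2) z)). In particular r_m^{(T)} is a rational function of exact type (0, 2m). -/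
open Polynomial

/-!
Put `ζ_j = S e^{iθ_j}`: these are the `2m` roots of `x^{2m} + S^{2m}`, and with `c = S + S⁻¹` the
nodes and weights are the Joukowski images `z_j = (ζ_j + ζ_j⁻¹)/c`, `w_j = (ζ_j - ζ_j⁻¹)/(2mc)`.
Writing `cz = t + t⁻¹`, each term splits into partial fractions
`(ζ - ζ⁻¹)/(ζ + ζ⁻¹ - t - t⁻¹) = 1 + t/(ζ - t) + t⁻¹/(ζ - t⁻¹)`, and `∑_j 1/(x - ζ_j)` is the
logarithmic derivative `2m x^{2m-1}/(x^{2m} + S^{2m})`. This leaves a rational identity in `t^{2m}`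
and `S^{2m}`, which matches the right-hand side because `T_n((t + t⁻¹)/2) = (t^n + t^{-n})/2`.
-/

namespace Polynomial

variable {K : Type*} [Field K]

theorem sum_one_div_sub_eq_eval_derivative_div_eval {ι : Type*} (s : Finset ι) (ζ : ι → K)
    {x : K} (hx : ∀ i ∈ s, ζ i ≠ x) :
    ∑ i ∈ s, 1 / (x - ζ i) =
      (∏ i ∈ s, (X - C (ζ i))).derivative.eval x / (∏ i ∈ s, (X - C (ζ i))).eval x := by
  have hsplits : (∏ i ∈ s, (X - C (ζ i))).Splits := Splits.prod fun i _ => Splits.X_sub_C _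
  have hroots : (∏ i ∈ s, (X - C (ζ i))).roots = s.val.map ζ := by
    rw [← roots_multiset_prod_X_sub_C (s.val.map ζ), Multiset.map_map]
    rfl
  have heval : (∏ i ∈ s, (X - C (ζ i))).eval x ≠ 0 := by
    rw [eval_prod]
    exact Finset.prod_ne_zero_iff.mpr fun i hi => by simpa [sub_eq_zero] using (hx i hi).symm
  rw [hsplits.eval_derivative_div_eval_of_ne_zero heval, hroots, Multiset.map_map]
  rfl

theorem pow_add_ne_zero_of_prod_X_sub_C_eq {ι : Type*} {s : Finset ι} {ζ : ι → K}
    {n : ℕ} {a : K} (h : ∏ i ∈ s, (X - C (ζ i)) = X ^ n + C a) {x : K} (hx : ∀ i ∈ s, ζ i ≠ x) :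
    x ^ n + a ≠ 0 := by
  have heval := congrArg (eval x) h
  simp only [eval_prod, eval_sub, eval_X, eval_C, eval_add, eval_pow] at heval
  rw [← heval]
  exact Finset.prod_ne_zero_iff.mpr fun i hi => sub_ne_zero.mpr (hx i hi).symm

theorem sum_div_sub_eq_of_prod_X_sub_C_eq {ι : Type*} (s : Finset ι) (ζ : ι → K) {n : ℕ}
    (hn : n ≠ 0) {a : K} (h : ∏ i ∈ s, (X - C (ζ i)) = X ^ n + C a) {x : K}
    (hx : ∀ i ∈ s, ζ i ≠ x) :
    ∑ i ∈ s, x / (ζ i - x) = -(n * x ^ n / (x ^ n + a)) := by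
  calc ∑ i ∈ s, x / (ζ i - x) = -x * ∑ i ∈ s, 1 / (x - ζ i) := by
        rw [Finset.mul_sum]
        refine Finset.sum_congr rfl fun i _ => ?_
        rw [← neg_sub, div_neg, mul_one_div, neg_div]
    _ = -(n * x ^ n / (x ^ n + a)) := by
        rw [sum_one_div_sub_eq_eval_derivative_div_eval s ζ hx, h]
        simp only [derivative_add, derivative_X_pow, derivative_C, add_zero, eval_mul, eval_C,
          eval_pow, eval_X, eval_add]
        rw [← mul_pow_sub_one hn x]
        ring

theorem Chebyshev.T_eval_add_div_two [NeZero (2 : K)] {x y : K} (hxy : x * y = 1) (n : ℕ) :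
    (T K n).eval ((x + y) / 2) = (x ^ n + y ^ n) / 2 := by
  let : Invertible (2 : K) := invertibleOfNonzero two_ne_zero
  rw [chebyshev_T_eq_dickson_one_one, eval_mul, eval_C, eval_comp, eval_mul, eval_X, eval_ofNat,
    mul_div_cancel₀ _ two_ne_zero, dickson_one_one_eval_add_inv x y hxy, invOf_eq_inv,
    inv_mul_eq_div]

end Polynomial

theorem IsAlgClosed.exists_ne_zero_add_inv_eq {K : Type*} [Field K] [IsAlgClosed K] (u : K) :
    ∃ t ≠ 0, t + t⁻¹ = u := by
  obtain ⟨t, ht⟩ := IsAlgClosed.exists_root (X ^ 2 - C u * X + 1 : K[X]) <| by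
    rw [show (X ^ 2 - C u * X + 1 : K[X]).degree = 2 by compute_degree!]
    decide
  simp only [IsRoot, eval_add, eval_sub, eval_pow, eval_mul, eval_C, eval_X, eval_one] at ht
  have ht0 : t ≠ 0 := by rintro rfl; simp at ht
  refine ⟨t, ht0, ?_⟩
  field_simp
  linear_combination ht

section Joukowski

variable {K : Type*} [Field K] {ζ t : K}

theorem ne_and_ne_inv_of_add_inv_ne (h : ζ + ζ⁻¹ ≠ t + t⁻¹) : ζ ≠ t ∧ ζ ≠ t⁻¹ := by
  constructor <;> rintro rfl <;> simp [add_comm] at h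

theorem add_inv_sub_add_inv_eq (hζ : ζ ≠ 0) (ht : t ≠ 0) :
    ζ + ζ⁻¹ - (t + t⁻¹) = (ζ - t) * (ζ - t⁻¹) / ζ := by
  field_simp
  ring

theorem sub_inv_div_add_inv_sub_add_inv (hζ : ζ ≠ 0) (ht : t ≠ 0) (h : ζ + ζ⁻¹ ≠ t + t⁻¹) :
    (ζ - ζ⁻¹) / (ζ + ζ⁻¹ - (t + t⁻¹)) = 1 + t / (ζ - t) + t⁻¹ / (ζ - t⁻¹) := by
  obtain ⟨h₁, h₂⟩ := ne_and_ne_inv_of_add_inv_ne h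
  rw [add_inv_sub_add_inv_eq hζ ht]
  have h₁' : ζ - t ≠ 0 := sub_ne_zero.mpr h₁
  have h₂' : ζ * t - 1 ≠ 0 := fun h => h₂ (eq_inv_of_mul_eq_one_left (sub_eq_zero.mp h))
  field_simp
  ring

theorem one_sub_div_add_sub_inv_div_inv_add [NeZero (2 : K)] {u A : K} (hu : u ≠ 0)
    (hA : A - A⁻¹ ≠ 0) (hu₁ : u + A ≠ 0) (hu₂ : u⁻¹ + A ≠ 0) :
    1 - u / (u + A) - u⁻¹ / (u⁻¹ + A) =
      1 / ((A + A⁻¹) / (A - A⁻¹) + 2 / (A - A⁻¹) * ((u + u⁻¹) / 2)) := by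
  have hA₀ : A ≠ 0 := by
    rintro rfl
    simp at hA
  have hu₂' : 1 + u * A ≠ 0 := by
    rwa [← mul_ne_zero_iff_right hu, add_mul, inv_mul_cancel₀ hu, mul_comm A] at hu₂
  have hA' : A ^ 2 - 1 ≠ 0 := by
    rwa [← mul_ne_zero_iff_right hA₀, sub_mul, inv_mul_cancel₀ hA₀, ← sq] at hA
  have hL : 1 - u / (u + A) - u⁻¹ / (u⁻¹ + A) = u * (A ^ 2 - 1) / ((u + A) * (1 + u * A)) := by
    field_simp
    ring
  have hR : (A + A⁻¹) / (A - A⁻¹) + 2 / (A - A⁻¹) * ((u + u⁻¹) / 2) =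
      (u + A) * (1 + u * A) / (u * (A ^ 2 - 1)) := by
    field_simp
    ring
  rw [hL, hR, one_div_div]

theorem sum_sub_inv_div_add_inv_sub_add_inv [NeZero (2 : K)] {ι : Type*} (s : Finset ι)
    (ζ : ι → K) {n : ℕ} (hn : n ≠ 0) {a : K} (h : ∏ i ∈ s, (X - C (ζ i)) = X ^ n + C a)
    (hζ : ∀ i ∈ s, ζ i ≠ 0) (ht : t ≠ 0) (hζt : ∀ i ∈ s, ζ i + (ζ i)⁻¹ ≠ t + t⁻¹)
    (ha : a - a⁻¹ ≠ 0) :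
    ∑ i ∈ s, (ζ i - (ζ i)⁻¹) / (ζ i + (ζ i)⁻¹ - (t + t⁻¹)) =
      n / ((a + a⁻¹) / (a - a⁻¹) + 2 / (a - a⁻¹) * ((t ^ n + t⁻¹ ^ n) / 2)) := by
  have hcard : s.card = n := by simpa using congrArg natDegree h
  have h₁ : ∀ i ∈ s, ζ i ≠ t := fun i hi => (ne_and_ne_inv_of_add_inv_ne (hζt i hi)).1
  have h₂ : ∀ i ∈ s, ζ i ≠ t⁻¹ := fun i hi => (ne_and_ne_inv_of_add_inv_ne (hζt i hi)).2
  rw [Finset.sum_congr rfl fun i hi => sub_inv_div_add_inv_sub_add_inv (hζ i hi) ht (hζt i hi),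
    Finset.sum_add_distrib, Finset.sum_add_distrib, sum_div_sub_eq_of_prod_X_sub_C_eq s ζ hn h h₁,
    sum_div_sub_eq_of_prod_X_sub_C_eq s ζ hn h h₂, Finset.sum_const, nsmul_one, hcard, inv_pow,
    div_eq_mul_one_div (n : K), ← one_sub_div_add_sub_inv_div_inv_add (pow_ne_zero n ht) ha
      (pow_add_ne_zero_of_prod_X_sub_C_eq h h₁)
      (inv_pow t n ▸ pow_add_ne_zero_of_prod_X_sub_C_eq h h₂)]
  ring

end Joukowski

open Complex in
theorem Complex.X_pow_add_C_pow_eq_prod {n : ℕ} (hn : n ≠ 0) (r : ℂ) :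
    X ^ n + C (r ^ n) =
      ∏ j ∈ Finset.range n, (X - C (r * exp (I * (Real.pi * (2 * j + 1) / n)))) := by
  have e : (r * exp (Real.pi * I / n)) ^ n = -r ^ n := by
    rw [mul_pow, ← exp_nat_mul, mul_div_cancel₀ _ (Nat.cast_ne_zero.mpr hn), exp_pi_mul_I,
      mul_neg_one]
  rw [← sub_neg_eq_add, ← map_neg C,
    X_pow_sub_C_eq_prod (isPrimitiveRoot_exp n hn) (Nat.pos_of_ne_zero hn) e]
  refine Finset.prod_congr rfl fun j _ => ?_
  rw [← exp_nat_mul, mul_left_comm, ← exp_add]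
  congr 4
  field_simp

/-- **Trapezoid rule = type-1 Chebyshev filter** (Güttel–Polizzi–Tang–Viaud,
Lemma 3.2).  Away from its poles, the trapezoid-rule rational function
`r_m^{(T)}(z) = Σ_j w_j/(z_j − z)` equals
`1/(α + β T_{2m}(((S+S⁻¹)/2) z))`. -/
theorem trapezoid_rule_chebyshev_identity
    (m : ℕ) (hm : 0 < m) (S : ℝ) (hS : 1 < S)
    (θ : Fin (2 * m) → ℝ)
    (hθ : ∀ j, θ j = Real.pi * (2 * (j : ℝ) + 1) / (2 * m))
    (zn w : Fin (2 * m) → ℂ)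
    (hzn : ∀ j, zn j =
      ((S : ℂ) * Complex.exp (Complex.I * (θ j : ℂ)) +
        (S : ℂ)⁻¹ * Complex.exp (-(Complex.I * (θ j : ℂ)))) / ((S : ℂ) + (S : ℂ)⁻¹))
    (hw : ∀ j, w j =
      (1 / (2 * (m : ℂ))) *
        ((S : ℂ) * Complex.exp (Complex.I * (θ j : ℂ)) -
          (S : ℂ)⁻¹ * Complex.exp (-(Complex.I * (θ j : ℂ)))) / ((S : ℂ) + (S : ℂ)⁻¹))
    (α β : ℝ)
    (hα : α = (S ^ (2 * m) + S⁻¹ ^ (2 * m)) / (S ^ (2 * m) - S⁻¹ ^ (2 * m)))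
    (hβ : β = 2 / (S ^ (2 * m) - S⁻¹ ^ (2 * m)))
    (z : ℂ) (hz : ∀ j, z ≠ zn j) :
    ∑ j, w j / (zn j - z)
      = 1 / ((α : ℂ) + (β : ℂ) *
          (Polynomial.Chebyshev.T ℂ (2 * m)).eval ((((S : ℂ) + (S : ℂ)⁻¹) / 2) * z)) := by
  set c : ℂ := S + (S : ℂ)⁻¹
  set ζ : Fin (2 * m) → ℂ := fun j => S * Complex.exp (Complex.I * θ j)
  have hS0 : (S : ℂ) ≠ 0 := by exact_mod_cast (zero_lt_one.trans hS).ne'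
  have hc : c ≠ 0 := by
    simp only [c]
    exact_mod_cast (by positivity : (0 : ℝ) < S + S⁻¹).ne'
  have hζinv : ∀ j, (S : ℂ)⁻¹ * Complex.exp (-(Complex.I * θ j)) = (ζ j)⁻¹ := fun j => by
    rw [Complex.exp_neg, ← mul_inv]
  have hzn' : ∀ j, zn j = (ζ j + (ζ j)⁻¹) / c := fun j => by rw [hzn, hζinv]
  have hw' : ∀ j, w j = 1 / (2 * m) * (ζ j - (ζ j)⁻¹) / c := fun j => by rw [hw, hζinv]
  obtain ⟨t, ht0, rfl⟩ : ∃ t ≠ 0, (t + t⁻¹) / c = z := by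
    obtain ⟨t, ht0, ht⟩ := IsAlgClosed.exists_ne_zero_add_inv_eq (c * z)
    exact ⟨t, ht0, by rw [ht, mul_div_cancel_left₀ z hc]⟩
  have hterm : ∀ j, w j / (zn j - (t + t⁻¹) / c) =
      1 / (2 * m) * ((ζ j - (ζ j)⁻¹) / (ζ j + (ζ j)⁻¹ - (t + t⁻¹))) := fun j => by
    rw [hw', hzn', ← sub_div, div_div_div_cancel_right₀ hc, mul_div_assoc]
  have hprod : ∏ j, (X - C (ζ j)) = X ^ (2 * m) + C ((S : ℂ) ^ (2 * m)) := by
    rw [Complex.X_pow_add_C_pow_eq_prod (by omega), ← Fin.prod_univ_eq_prod_range]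
    refine Finset.prod_congr rfl fun j _ => ?_
    simp [ζ, hθ]
  have hA : (S : ℂ) ^ (2 * m) - ((S : ℂ) ^ (2 * m))⁻¹ ≠ 0 := by
    have h₁ : 1 < S ^ (2 * m) := one_lt_pow₀ hS (by omega)
    exact_mod_cast (sub_pos.mpr ((inv_lt_one_of_one_lt₀ h₁).trans h₁)).ne'
  have hT := Chebyshev.T_eval_add_div_two (mul_inv_cancel₀ ht0) (2 * m)
  rw [Finset.sum_congr rfl fun j _ => hterm j, ← Finset.mul_sum,
    sum_sub_inv_div_add_inv_sub_add_inv _ ζ (by omega) hprod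
      (fun j _ => mul_ne_zero hS0 (Complex.exp_ne_zero _)) ht0
      (fun j _ h => hz j (by rw [hzn', h])) hA,
    show c / 2 * ((t + t⁻¹) / c) = (t + t⁻¹) / 2 by field_simp, ← mul_div_assoc, hα, hβ]
  push_cast at hT ⊢
  rw [one_div_mul_cancel (by exact_mod_cast (by omega : 2 * m ≠ 0)), hT]
  simp only [inv_pow]
end

section
/- Each mapped trapezoid node is a zero of the Chebyshev-filter denominator: for every j = 1,…,2m one has α + β · T_{2m}(((S + S^{-1})/2) z_j) = 0, where z_j = (S e^{iθ_j} + S^{-1} e^{-iθ_j})/(S + S^{-1}) and θ_j = π(j − 1/2)/m. -/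
open Polynomial

/-!
The map `w ↦ (w + w⁻¹)/2` conjugates `T_n` to `w ↦ wⁿ`, and the scaled node `((S + S⁻¹)/2) z_j`
is the image of `w_j = S e^{iθ_j}`. Since `e^{iθ_j}` is a `2m`-th root of `-1`, we get
`T_{2m}(((S + S⁻¹)/2) z_j) = -(S^{2m} + S^{-2m})/2`, which is exactly the zero of `α + β t`.
-/

namespace Polynomial.Chebyshev

theorem T_eval_invOf_two_mul_add {R : Type*} [CommRing R] [Invertible (2 : R)]
    {x y : R} (h : x * y = 1) (n : ℕ) :
    (T R n).eval (⅟2 * (x + y)) = ⅟2 * (x ^ n + y ^ n) := by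
  rw [chebyshev_T_eq_dickson_one_one, eval_mul, eval_C, eval_comp, eval_mul, eval_X, eval_ofNat,
    ← mul_assoc, mul_invOf_self, one_mul, dickson_one_one_eval_add_inv x y h]

end Polynomial.Chebyshev

theorem Complex.exp_I_mul_pow_of_eq_odd_mul_pi_div {θ : ℝ} {n k : ℕ} (hn : n ≠ 0)
    (hθ : θ = Real.pi * (2 * k + 1) / n) :
    Complex.exp (Complex.I * θ) ^ n = -1 := by
  have hnθ : n * (Complex.I * θ) = k * (2 * Real.pi * Complex.I) + Real.pi * Complex.I := by
    rw [hθ]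
    push_cast
    field_simp
  rw [← Complex.exp_nat_mul, hnθ, Complex.exp_add, Complex.exp_nat_mul_two_pi_mul_I,
    Complex.exp_pi_mul_I, one_mul]

theorem trapezoid_nodes_zero_of_chebyshev_denominator_general
    (m : ℕ) (S : ℝ) (hS : 1 < S)
    (θ : Fin (2 * m) → ℝ)
    (hθ : ∀ j, θ j = Real.pi * (2 * (j : ℝ) + 1) / (2 * m))
    (zn : Fin (2 * m) → ℂ)
    (hzn : ∀ j, zn j =
      ((S : ℂ) * Complex.exp (Complex.I * (θ j : ℂ)) +
        (S : ℂ)⁻¹ * Complex.exp (-(Complex.I * (θ j : ℂ)))) / ((S : ℂ) + (S : ℂ)⁻¹))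
    (α β : ℝ)
    (hα : α = (S ^ (2 * m) + S⁻¹ ^ (2 * m)) / (S ^ (2 * m) - S⁻¹ ^ (2 * m)))
    (hβ : β = 2 / (S ^ (2 * m) - S⁻¹ ^ (2 * m))) :
    ∀ j : Fin (2 * m),
      (α : ℂ) + (β : ℂ) *
        (Polynomial.Chebyshev.T ℂ (2 * m)).eval ((((S : ℂ) + (S : ℂ)⁻¹) / 2) * zn j) = 0 := by
  intro j
  have hS_pos : 0 < S := zero_lt_one.trans hS
  have hS₀ : (S : ℂ) ≠ 0 := by exact_mod_cast hS_pos.ne'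
  have hSS : (S : ℂ) + (S : ℂ)⁻¹ ≠ 0 := by exact_mod_cast (by positivity : 0 < S + S⁻¹).ne'
  set w : ℂ := S * Complex.exp (Complex.I * θ j)
  have hnode : (((S : ℂ) + (S : ℂ)⁻¹) / 2) * zn j = ⅟2 * (w + w⁻¹) := by
    rw [hzn, div_mul_div_cancel₀' hSS, mul_inv, ← Complex.exp_neg, invOf_eq_inv]
    ring
  have hw : w ^ (2 * m) = -(S : ℂ) ^ (2 * m) := by
    rw [mul_pow, Complex.exp_I_mul_pow_of_eq_odd_mul_pi_div (k := j) j.pos.ne'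
      (by exact_mod_cast hθ j)]
    ring
  have hT := Polynomial.Chebyshev.T_eval_invOf_two_mul_add
    (mul_inv_cancel₀ (by simp [w, hS₀] : w ≠ 0)) (2 * m)
  push_cast at hT
  rw [hnode, hT, inv_pow, hw, hα, hβ, invOf_eq_inv]
  push_cast
  ring

/-- **Mapped trapezoid nodes are zeros of the Chebyshev-filter denominator**
(Güttel–Polizzi–Tang–Viaud, proof of Lemma 3.2): for every `j = 1,…,2m`,
`α + β T_{2m}(((S+S⁻¹)/2) z_j) = 0`. -/
theorem trapezoid_nodes_zero_of_chebyshev_denominator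
    (m : ℕ) (hm : 0 < m) (S : ℝ) (hS : 1 < S)
    (θ : Fin (2 * m) → ℝ)
    (hθ : ∀ j, θ j = Real.pi * (2 * (j : ℝ) + 1) / (2 * m))
    (zn : Fin (2 * m) → ℂ)
    (hzn : ∀ j, zn j =
      ((S : ℂ) * Complex.exp (Complex.I * (θ j : ℂ)) +
        (S : ℂ)⁻¹ * Complex.exp (-(Complex.I * (θ j : ℂ)))) / ((S : ℂ) + (S : ℂ)⁻¹))
    (α β : ℝ)
    (hα : α = (S ^ (2 * m) + S⁻¹ ^ (2 * m)) / (S ^ (2 * m) - S⁻¹ ^ (2 * m)))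
    (hβ : β = 2 / (S ^ (2 * m) - S⁻¹ ^ (2 * m))) :
    ∀ j : Fin (2 * m),
      (α : ℂ) + (β : ℂ) *
        (Polynomial.Chebyshev.T ℂ (2 * m)).eval ((((S : ℂ) + (S : ℂ)⁻¹) / 2) * zn j) = 0 :=
  trapezoid_nodes_zero_of_chebyshev_denominator_general m S hS θ hθ zn hzn α β hα hβ
end

section
/- Let q(z) = α + β · T_{2m}(((S + S^{-1})/2) z). Then for each j = 1,…,2m, the derivative of q at the mapped trapezoid node z_j satisfies q'(z_j) = β · m · (S + S^{-1}) · U_{2m−1}(((S + S^{-1})/2) z_j) = −1/w_j; equivalently, w_j · q'(z_j) = −1, so the residue of 1/q at its simple pole z_j equals −w_j. -/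
/-!
Write `ζ = S e^{iθ_j}`. Then `((S + S⁻¹)/2) z_j = (ζ + ζ⁻¹)/2` is a Joukowski image and
`w_j = (ζ - ζ⁻¹)/(2m(S + S⁻¹))`. Since `T_n' = n U_{n-1}` and
`U_{n-1}((ζ + ζ⁻¹)/2) (ζ - ζ⁻¹) = ζⁿ - ζ⁻ⁿ`, we get `w_j q'(z_j) = (β/2)(ζ^{2m} - ζ^{-2m})`.
As `2mθ_j` is an odd multiple of `π`, `ζ^{2m} = -S^{2m}`, so this equals
`-(β/2)(S^{2m} - S^{-2m}) = -1`.
-/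

open Polynomial

namespace Polynomial.Chebyshev

theorem S_eval_add_mul_sub_of_mul_eq_one {R : Type*} [CommRing R] {x y : R} (hxy : x * y = 1)
    (n : ℕ) : (S R (n - 1)).eval (x + y) * (x - y) = x ^ n - y ^ n := by
  induction n using Nat.twoStepInduction with
  | zero => simp
  | one => simp
  | more n ih₀ ih₁ =>
    have hrec : S R ((n + 2 : ℕ) - 1) = X * S R ((n + 1 : ℕ) - 1) - S R ((n : ℕ) - 1) := by
      have := S_add_one R n
      push_cast
      ring_nf at this ⊢
      exact this
    rw [hrec, eval_sub, eval_mul, eval_X, sub_mul, mul_assoc, ih₁, ih₀]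
    linear_combination (x ^ n - y ^ n) * hxy

theorem U_eval_half_add_inv_mul_sub_inv {K : Type*} [Field K] [NeZero (2 : K)] {x : K}
    (hx : x ≠ 0) (n : ℕ) :
    (U K (n - 1)).eval ((x + x⁻¹) / 2) * (x - x⁻¹) = x ^ n - x⁻¹ ^ n := by
  rw [← S_comp_two_mul_X, eval_comp, eval_mul, eval_X, eval_ofNat,
    mul_div_cancel₀ _ two_ne_zero]
  exact S_eval_add_mul_sub_of_mul_eq_one (mul_inv_cancel₀ hx) n

theorem hasDerivAt_T_eval_const_mul {𝕜 : Type*} [NontriviallyNormedField 𝕜] (n : ℤ) (c z : 𝕜) :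
    HasDerivAt (fun z => (T 𝕜 n).eval (c * z)) (c * n * (U 𝕜 (n - 1)).eval (c * z)) z := by
  have hlin : HasDerivAt (fun z => c * z) c z := by simpa using (hasDerivAt_id z).const_mul c
  have := ((T 𝕜 n).hasDerivAt (c * z)).comp z hlin
  rw [T_derivative_eq_U, eval_mul, eval_intCast] at this
  exact this.congr_deriv (by ring)

theorem joukowski_weight_mul_U_eval {K : Type*} [Field K] [NeZero (2 : K)] {n : ℕ}
    (hn : (n : K) ≠ 0) {σ ζ : K} (hσ : σ ≠ 0) (hζ : ζ ≠ 0) :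
    1 / n * (ζ - ζ⁻¹) / σ * (n * σ * (U K (n - 1)).eval (σ / 2 * ((ζ + ζ⁻¹) / σ))) =
      ζ ^ n - ζ⁻¹ ^ n := by
  rw [← U_eval_half_add_inv_mul_sub_inv hζ, div_mul_div_comm, mul_comm 2,
    mul_div_mul_left _ _ hσ]
  field_simp

end Polynomial.Chebyshev

namespace Complex

theorem exp_I_mul_pow_eq_neg_one {n k : ℕ} {θ : ℝ} (h : n * θ = (2 * k + 1) * Real.pi) :
    exp (I * θ) ^ n = -1 := by
  have h' : (n : ℂ) * (I * θ) = (2 * k + 1 : ℕ) * (Real.pi * I) := by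
    have := congrArg ofReal h
    push_cast at this ⊢
    linear_combination I * this
  rw [← exp_nat_mul, h', exp_nat_mul, exp_pi_mul_I]
  exact Odd.neg_one_pow ⟨k, rfl⟩

theorem mul_exp_I_mul_pow_sub_inv_pow {n k : ℕ} {θ : ℝ} (h : n * θ = (2 * k + 1) * Real.pi)
    (s : ℂ) : (s * exp (I * θ)) ^ n - (s * exp (I * θ))⁻¹ ^ n = -(s ^ n - s⁻¹ ^ n) := by
  rw [mul_inv, mul_pow, mul_pow, inv_pow (exp _), exp_I_mul_pow_eq_neg_one h]
  ring

end Complex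

theorem inv_pow_lt_pow_of_one_lt {S : ℝ} (hS : 1 < S) {n : ℕ} (hn : n ≠ 0) :
    S⁻¹ ^ n < S ^ n :=
  (pow_lt_one₀ (by positivity) (inv_lt_one_of_one_lt₀ hS) hn).trans (one_lt_pow₀ hS hn)

open Polynomial.Chebyshev in
theorem trapezoid_nodes_residues_general
    (m : ℕ) (S : ℝ) (hS : 1 < S)
    (θ : Fin (2 * m) → ℝ)
    (hθ : ∀ j, θ j = Real.pi * (2 * (j : ℝ) + 1) / (2 * m))
    (zn w : Fin (2 * m) → ℂ)
    (hzn : ∀ j, zn j =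
      ((S : ℂ) * Complex.exp (Complex.I * (θ j : ℂ)) +
        (S : ℂ)⁻¹ * Complex.exp (-(Complex.I * (θ j : ℂ)))) / ((S : ℂ) + (S : ℂ)⁻¹))
    (hw : ∀ j, w j =
      (1 / (2 * (m : ℂ))) *
        ((S : ℂ) * Complex.exp (Complex.I * (θ j : ℂ)) -
          (S : ℂ)⁻¹ * Complex.exp (-(Complex.I * (θ j : ℂ)))) / ((S : ℂ) + (S : ℂ)⁻¹))
    (α β : ℝ)
    (hβ : β = 2 / (S ^ (2 * m) - S⁻¹ ^ (2 * m)))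
    (q : ℂ → ℂ)
    (hq : ∀ z, q z = (α : ℂ) + (β : ℂ) *
      (Polynomial.Chebyshev.T ℂ (2 * m)).eval ((((S : ℂ) + (S : ℂ)⁻¹) / 2) * z)) :
    ∀ j : Fin (2 * m),
      deriv q (zn j)
          = (β : ℂ) * (m : ℂ) * ((S : ℂ) + (S : ℂ)⁻¹) *
            (Polynomial.Chebyshev.U ℂ (2 * (m : ℤ) - 1)).eval
              ((((S : ℂ) + (S : ℂ)⁻¹) / 2) * zn j) ∧
        deriv q (zn j) = -1 / w j ∧
        w j * deriv q (zn j) = -1 := by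
  intro j
  have hm : m ≠ 0 := by have := j.pos; omega
  have hσ : (S : ℂ) + (S : ℂ)⁻¹ ≠ 0 := by exact_mod_cast (by positivity : S + S⁻¹ ≠ 0)
  set σ : ℂ := (S : ℂ) + (S : ℂ)⁻¹
  have hderiv : deriv q (zn j) =
      (β : ℂ) * m * σ * (U ℂ (2 * (m : ℤ) - 1)).eval (σ / 2 * zn j) := by
    rw [funext hq, (((hasDerivAt_T_eval_const_mul _ _ _).const_mul _).const_add _).deriv]
    push_cast; ring
  have hβ' : (β : ℂ) * ((S : ℂ) ^ (2 * m) - (S : ℂ)⁻¹ ^ (2 * m)) = 2 := by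
    have hden := sub_pos.2 (inv_pow_lt_pow_of_one_lt hS (by omega : 2 * m ≠ 0))
    rw [hβ]; push_cast
    exact div_mul_cancel₀ _ (by exact_mod_cast hden.ne')
  obtain ⟨ζ, hζdef⟩ : ∃ ζ : ℂ, (S : ℂ) * Complex.exp (Complex.I * θ j) = ζ := ⟨_, rfl⟩
  have hpow : ζ ^ (2 * m) - ζ⁻¹ ^ (2 * m) = -((S : ℂ) ^ (2 * m) - (S : ℂ)⁻¹ ^ (2 * m)) :=
    hζdef ▸ Complex.mul_exp_I_mul_pow_sub_inv_pow (k := j)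
      (by rw [hθ]; push_cast; field_simp : ((2 * m : ℕ) : ℝ) * θ j = _) S
  have hζ : ζ ≠ 0 := hζdef ▸ mul_ne_zero (by exact_mod_cast (by positivity : S ≠ 0))
    (Complex.exp_ne_zero _)
  have hζinv : (S : ℂ)⁻¹ * Complex.exp (-(Complex.I * θ j)) = ζ⁻¹ := by
    rw [← hζdef, mul_inv, Complex.exp_neg]
  have hres : w j * deriv q (zn j) = -1 := calc
    _ = β / 2 * (1 / ((2 * m : ℕ) : ℂ) * (ζ - ζ⁻¹) / σ * ((2 * m : ℕ) * σ *
        (U ℂ ((2 * m : ℕ) - 1)).eval (σ / 2 * ((ζ + ζ⁻¹) / σ)))) := by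
      rw [hw, hderiv, hzn, hζdef, hζinv]; push_cast; field_simp
    _ = β / 2 * -((S : ℂ) ^ (2 * m) - (S : ℂ)⁻¹ ^ (2 * m)) := by
      rw [joukowski_weight_mul_U_eval (by exact_mod_cast (by omega : 2 * m ≠ 0)) hσ hζ, hpow]
    _ = -1 := by linear_combination -hβ' / 2
  refine ⟨hderiv, ?_, hres⟩
  rw [eq_div_iff (left_ne_zero_of_mul (by rw [hres]; norm_num))]
  linear_combination hres

/-- **Residues of the Chebyshev filter at the mapped trapezoid nodes**
(Güttel–Polizzi–Tang–Viaud, proof of Lemma 3.2).  For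
`q(z) = α + β T_{2m}(((S+S⁻¹)/2) z)` and each `j`,
`q'(z_j) = β m (S+S⁻¹) U_{2m−1}(((S+S⁻¹)/2) z_j) = −1/w_j`, i.e. `w_j q'(z_j) = −1`,
so the residue of `1/q` at its simple pole `z_j` is `−w_j`. -/
theorem trapezoid_nodes_residues
    (m : ℕ) (hm : 0 < m) (S : ℝ) (hS : 1 < S)
    (θ : Fin (2 * m) → ℝ)
    (hθ : ∀ j, θ j = Real.pi * (2 * (j : ℝ) + 1) / (2 * m))
    (zn w : Fin (2 * m) → ℂ)
    (hzn : ∀ j, zn j =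
      ((S : ℂ) * Complex.exp (Complex.I * (θ j : ℂ)) +
        (S : ℂ)⁻¹ * Complex.exp (-(Complex.I * (θ j : ℂ)))) / ((S : ℂ) + (S : ℂ)⁻¹))
    (hw : ∀ j, w j =
      (1 / (2 * (m : ℂ))) *
        ((S : ℂ) * Complex.exp (Complex.I * (θ j : ℂ)) -
          (S : ℂ)⁻¹ * Complex.exp (-(Complex.I * (θ j : ℂ)))) / ((S : ℂ) + (S : ℂ)⁻¹))
    (α β : ℝ)
    (hα : α = (S ^ (2 * m) + S⁻¹ ^ (2 * m)) / (S ^ (2 * m) - S⁻¹ ^ (2 * m)))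
    (hβ : β = 2 / (S ^ (2 * m) - S⁻¹ ^ (2 * m)))
    (q : ℂ → ℂ)
    (hq : ∀ z, q z = (α : ℂ) + (β : ℂ) *
      (Polynomial.Chebyshev.T ℂ (2 * m)).eval ((((S : ℂ) + (S : ℂ)⁻¹) / 2) * z)) :
    ∀ j : Fin (2 * m),
      deriv q (zn j)
          = (β : ℂ) * (m : ℂ) * ((S : ℂ) + (S : ℂ)⁻¹) *
            (Polynomial.Chebyshev.U ℂ (2 * (m : ℤ) - 1)).eval
              ((((S : ℂ) + (S : ℂ)⁻¹) / 2) * zn j) ∧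
        deriv q (zn j) = -1 / w j ∧
        w j * deriv q (zn j) = -1 :=
  trapezoid_nodes_residues_general m S hS θ hθ zn w hzn hw α β hβ q hq
end

section
/- The trapezoid-rule rational function takes at the interval endpoints ±1 the value r_m^{(T)}(1) = r_m^{(T)}(−1) = (S^{2m} − S^{-2m})/(2(S^{2m} + S^{-2m})), and consequently lim_{S → ∞} r_m^{(T)}(±1) = 1/2. -/
/-!
Write `E_j = e^{iθ_j}`; these are the `2m` roots of `E^{2m} = -1`. For `t = ±1` and `c = S^{-2}`,
each term `w_j / (z_j - t)` splits into partial fractions `(1 - t/(t - E_j) - tc/(tc - E_j)) / 2m`.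
Since `X^{2m} + 1 = ∏_j (X - E_j)`, its logarithmic derivative gives
`∑_j x/(x - E_j) = 2m x^{2m}/(x^{2m} + 1)`, and evaluating at `x = t` and `x = tc` (where
`t^{2m} = 1`, `(tc)^{2m} = S^{-4m}`) yields `1/2 - S^{-4m}/(S^{-4m} + 1)`, which is the claimed value.
-/

open Complex Finset Polynomial Filter Topology

theorem IsPrimitiveRoot.sum_inv_sub_pow_mul {𝕜 : Type*} [NontriviallyNormedField 𝕜] {n : ℕ}
    {ζ α a x : 𝕜} (hζ : IsPrimitiveRoot ζ n) (hn : 0 < n) (hα : α ^ n = a) (hx : x ^ n ≠ a) :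
    ∑ i ∈ range n, (x - ζ ^ i * α)⁻¹ = n * x ^ (n - 1) / (x ^ n - a) := by
  have hprod : (fun y => y ^ n - a) = fun y => ∏ i ∈ range n, (y - ζ ^ i * α) := funext fun y => by
    simpa [eval_prod] using congrArg (eval y) (X_pow_sub_C_eq_prod hζ hn hα)
  have hne : ∀ i ∈ range n, x - ζ ^ i * α ≠ 0 := fun i _ h => hx <| by
    rw [sub_eq_zero.mp h, mul_pow, ← pow_mul, mul_comm i, pow_mul, hζ.pow_eq_one, one_pow, one_mul,
      hα]
  calc ∑ i ∈ range n, (x - ζ ^ i * α)⁻¹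
      = ∑ i ∈ range n, logDeriv (fun y => y - ζ ^ i * α) x := by simp [logDeriv_apply]
    _ = logDeriv (fun y => ∏ i ∈ range n, (y - ζ ^ i * α)) x :=
      (logDeriv_prod hne fun _ _ => by fun_prop).symm
    _ = n * x ^ (n - 1) / (x ^ n - a) := by rw [← hprod]; simp [logDeriv_apply]

noncomputable def negOneRoot (n j : ℕ) : ℂ := exp (I * ↑(Real.pi * (2 * (j : ℝ) + 1) / n))

theorem negOneRoot_eq_pow_mul {n : ℕ} (hn : n ≠ 0) (j : ℕ) :
    negOneRoot n j = exp (2 * Real.pi * I / n) ^ j * exp (Real.pi * I / n) := by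
  rw [negOneRoot, ← exp_nat_mul, ← exp_add]
  congr 1
  push_cast
  field_simp

theorem exp_pi_mul_I_div_pow {n : ℕ} (hn : n ≠ 0) : exp (Real.pi * I / n) ^ n = -1 := by
  rw [← exp_nat_mul, mul_div_cancel₀ _ (Nat.cast_ne_zero.mpr hn), exp_pi_mul_I]

theorem negOneRoot_pow {n : ℕ} (hn : n ≠ 0) (j : ℕ) : negOneRoot n j ^ n = -1 := by
  rw [negOneRoot_eq_pow_mul hn, mul_pow, ← pow_mul, mul_comm j, pow_mul,
    (isPrimitiveRoot_exp n hn).pow_eq_one, one_pow, one_mul, exp_pi_mul_I_div_pow hn]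

theorem sum_mul_inv_sub_negOneRoot {n : ℕ} (hn : 0 < n) {x : ℂ} (hx : x ^ n ≠ -1) :
    ∑ j : Fin n, x * (x - negOneRoot n j)⁻¹ = n * x ^ n / (x ^ n + 1) := by
  rw [← mul_sum, Fin.sum_univ_eq_sum_range (fun j => (x - negOneRoot n j)⁻¹)]
  simp_rw [negOneRoot_eq_pow_mul hn.ne']
  rw [(isPrimitiveRoot_exp n hn.ne').sum_inv_sub_pow_mul hn (exp_pi_mul_I_div_pow hn.ne') hx,
    sub_neg_eq_add, ← mul_div_assoc, mul_left_comm, mul_pow_sub_one hn.ne']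

/- Clearing `E (a + b)`, the quotient is `(a E² - b) / ((E - t) (a E - t b))` when `t² = 1`;
its poles are `t` and `t b / a = t b²`. -/
theorem joukowski_div_sub_eq {K : Type*} [Field K] {a b t E : K} (ht : t ^ 2 = 1)
    (hab : a * b = 1) (hsum : a + b ≠ 0) (hE : E ≠ 0) (hEt : t - E ≠ 0) (hEc : t * b ^ 2 - E ≠ 0) :
    (a * E - b * E⁻¹) / (a + b) / ((a * E + b * E⁻¹) / (a + b) - t) =
      1 - t * (t - E)⁻¹ - t * b ^ 2 * (t * b ^ 2 - E)⁻¹ := by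
  have ha : a ≠ 0 := left_ne_zero_of_mul_eq_one hab
  have hden : (a * E + b * E⁻¹) / (a + b) - t =
      a * (t - E) * (t * b ^ 2 - E) / (E * (a + b)) := by
    field_simp
    linear_combination (-b) * ht + (E * b * t - b * t ^ 2) * hab
  have hEc' : b ^ 2 * t - E ≠ 0 := by rwa [mul_comm]
  rw [hden]
  field_simp
  linear_combination (b * t ^ 2) * hab + b * ht

theorem sum_joukowski_div_sub_eq {n : ℕ} (hn : 0 < n) (heven : Even n) {S : ℝ} (hS : 0 < S)
    {t : ℂ} (ht : t ^ 2 = 1) :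
    ∑ j : Fin n,
      ((S : ℂ) * negOneRoot n j - (S : ℂ)⁻¹ * (negOneRoot n j)⁻¹) / ((S : ℂ) + (S : ℂ)⁻¹) /
        (((S : ℂ) * negOneRoot n j + (S : ℂ)⁻¹ * (negOneRoot n j)⁻¹) / ((S : ℂ) + (S : ℂ)⁻¹) - t) =
      n * (((S ^ n - S⁻¹ ^ n) / (2 * (S ^ n + S⁻¹ ^ n)) : ℝ) : ℂ) := by
  have htn : t ^ n = 1 := by
    obtain ⟨k, rfl⟩ := heven
    rw [← two_mul, pow_mul, ht, one_pow]
  have hS0 : (S : ℂ) ≠ 0 := by exact_mod_cast hS.ne'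
  have hsum : (S : ℂ) + (S : ℂ)⁻¹ ≠ 0 := by exact_mod_cast (by positivity : 0 < S + S⁻¹).ne'
  have hmul : (S : ℂ) ^ n * (S : ℂ)⁻¹ ^ n = 1 := by rw [← mul_pow, mul_inv_cancel₀ hS0, one_pow]
  have hadd : (S : ℂ) ^ n + (S : ℂ)⁻¹ ^ n ≠ 0 := by
    exact_mod_cast (by positivity : 0 < S ^ n + S⁻¹ ^ n).ne'
  have hQ2 : ((S : ℂ)⁻¹ ^ n) ^ 2 + 1 ≠ 0 := by
    exact_mod_cast (by positivity : 0 < (S⁻¹ ^ n) ^ 2 + 1).ne'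
  have hc : (t * (S : ℂ)⁻¹ ^ 2) ^ n = ((S : ℂ)⁻¹ ^ n) ^ 2 := by
    rw [mul_pow, htn, one_mul, ← pow_mul, mul_comm, pow_mul]
  have ht1 : t ^ n ≠ -1 := by rw [htn]; norm_num
  have htc : (t * (S : ℂ)⁻¹ ^ 2) ^ n ≠ -1 := by
    rw [hc]
    exact fun h => hQ2 (by rw [h]; ring)
  have hroot : ∀ x : ℂ, x ^ n ≠ -1 → ∀ j : ℕ, x - negOneRoot n j ≠ 0 :=
    fun x hx j h => hx (by rw [sub_eq_zero.mp h, negOneRoot_pow hn.ne'])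
  rw [sum_congr rfl fun (j : Fin n) _ => joukowski_div_sub_eq (E := negOneRoot n j) ht
      (mul_inv_cancel₀ hS0) hsum (exp_ne_zero _) (hroot t ht1 j) (hroot _ htc j),
    sum_sub_distrib, sum_sub_distrib, sum_const, card_univ, Fintype.card_fin,
    sum_mul_inv_sub_negOneRoot hn ht1, sum_mul_inv_sub_negOneRoot hn htc, htn, hc]
  push_cast
  generalize (S : ℂ) ^ n = P at *
  generalize (S : ℂ)⁻¹ ^ n = Q at *
  rw [nsmul_eq_mul]
  field_simp
  linear_combination (-4 * n * Q) * hmul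

theorem tendsto_pow_sub_inv_pow_div_atTop {n : ℕ} (hn : 0 < n) :
    Tendsto (fun s : ℝ => (s ^ n - s⁻¹ ^ n) / (2 * (s ^ n + s⁻¹ ^ n))) atTop (𝓝 (1 / 2)) := by
  have hu : Tendsto (fun s : ℝ => (s⁻¹ ^ n) ^ 2) atTop (𝓝 0) := by
    simpa [hn.ne'] using ((tendsto_inv_atTop_zero (𝕜 := ℝ)).pow n).pow 2
  have hlim : Tendsto (fun s : ℝ => (1 - (s⁻¹ ^ n) ^ 2) / (2 * (1 + (s⁻¹ ^ n) ^ 2))) atTop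
      (𝓝 (1 / 2)) := by
    have h := ((tendsto_const_nhds (x := (1 : ℝ))).sub hu).div
      ((tendsto_const_nhds (x := (2 : ℝ))).mul ((tendsto_const_nhds (x := (1 : ℝ))).add hu))
      (by norm_num)
    rwa [show ((1 : ℝ) - 0) / (2 * (1 + 0)) = 1 / 2 by norm_num] at h
  refine hlim.congr' ?_
  filter_upwards [eventually_gt_atTop 0] with s hs
  have hinv : s ^ n * s⁻¹ ^ n = 1 := by rw [← mul_pow, mul_inv_cancel₀ hs.ne', one_pow]
  have hpos : 0 < s ^ n + s⁻¹ ^ n := by positivity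
  field_simp
  linear_combination (-2 * s⁻¹ ^ n) * hinv

/-- **Value of the trapezoid-rule filter at the interval endpoints**
(Güttel–Polizzi–Tang–Viaud, Remark 3.3 / Lemma 3.2):
`r_m^{(T)}(±1) = (S^{2m} − S^{−2m})/(2(S^{2m} + S^{−2m}))`, and consequently
`r_m^{(T)}(±1) → 1/2` as `S → ∞`. -/
theorem trapezoid_rule_value_at_endpoints
    (m : ℕ) (hm : 0 < m) (S : ℝ) (hS : 1 < S)
    (θ : Fin (2 * m) → ℝ)
    (hθ : ∀ j, θ j = Real.pi * (2 * (j : ℝ) + 1) / (2 * m))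
    (zn w : Fin (2 * m) → ℂ)
    (hzn : ∀ j, zn j =
      ((S : ℂ) * Complex.exp (Complex.I * (θ j : ℂ)) +
        (S : ℂ)⁻¹ * Complex.exp (-(Complex.I * (θ j : ℂ)))) / ((S : ℂ) + (S : ℂ)⁻¹))
    (hw : ∀ j, w j =
      (1 / (2 * (m : ℂ))) *
        ((S : ℂ) * Complex.exp (Complex.I * (θ j : ℂ)) -
          (S : ℂ)⁻¹ * Complex.exp (-(Complex.I * (θ j : ℂ)))) / ((S : ℂ) + (S : ℂ)⁻¹)) :
    (∑ j, w j / (zn j - 1)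
        = (((S ^ (2 * m) - S⁻¹ ^ (2 * m)) / (2 * (S ^ (2 * m) + S⁻¹ ^ (2 * m))) : ℝ) : ℂ)) ∧
      (∑ j, w j / (zn j - (-1))
        = (((S ^ (2 * m) - S⁻¹ ^ (2 * m)) / (2 * (S ^ (2 * m) + S⁻¹ ^ (2 * m))) : ℝ) : ℂ)) ∧
      Filter.Tendsto
        (fun s : ℝ => (s ^ (2 * m) - s⁻¹ ^ (2 * m)) / (2 * (s ^ (2 * m) + s⁻¹ ^ (2 * m))))
        Filter.atTop (nhds (1 / 2)) := by
  have hm2 : 0 < 2 * m := by omega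
  have hnode : ∀ j, Complex.exp (Complex.I * (θ j : ℂ)) = negOneRoot (2 * m) j := fun j => by
    rw [hθ, negOneRoot]
    push_cast
    rfl
  have hterm : ∀ t j, w j / (zn j - t) = 1 / (2 * (m : ℂ)) *
      (((S : ℂ) * negOneRoot (2 * m) j - (S : ℂ)⁻¹ * (negOneRoot (2 * m) j)⁻¹) /
          ((S : ℂ) + (S : ℂ)⁻¹) /
        (((S : ℂ) * negOneRoot (2 * m) j + (S : ℂ)⁻¹ * (negOneRoot (2 * m) j)⁻¹) /
          ((S : ℂ) + (S : ℂ)⁻¹) - t)) := fun t j => by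
    rw [hw, hzn, Complex.exp_neg, hnode, mul_div_assoc, mul_div_assoc]
  have hendpoint : ∀ t : ℂ, t ^ 2 = 1 → ∑ j, w j / (zn j - t) =
      (((S ^ (2 * m) - S⁻¹ ^ (2 * m)) / (2 * (S ^ (2 * m) + S⁻¹ ^ (2 * m))) : ℝ) : ℂ) := by
    intro t ht
    rw [sum_congr rfl fun j _ => hterm t j, ← mul_sum,
      sum_joukowski_div_sub_eq hm2 (even_two_mul m) (by linarith) ht, Nat.cast_mul, Nat.cast_two,
      ← mul_assoc, one_div_mul_cancel (by exact_mod_cast hm2.ne'), one_mul]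
  exact ⟨hendpoint 1 (one_pow 2), hendpoint (-1) (by norm_num),
    tendsto_pow_sub_inv_pow_div_atTop hm2⟩
end
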